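/- Let X be a compact connected metric space with at least two points such that for every ε > 0 there exists δ > 0 such that any two points x, y with dist(x,y) < δ both belong to some connected subset of X of diameter < ε. Let F : X ≃ₜ X be a homeomorphism and μ a Borel measure on X with μ(V) > 0 for every nonempty open set V. Suppose F has infinitely many sinks: there is a sequence (γ_j)_{j∈ℕ} of topological sinks of F (each with some trapping neighborhood) whose orbits O(γ_j) are pairwise disjoint. Then no Milnor attractor A of F is asymptotically stable; that is, it is not the case that A is Lyapunov stable for F and there exists ε > 0 such that every x with dist(x, A) < ε satisfies dist(F^[n](x), A) → 0 as n → ∞. (Abstract form of Okunev's theorem: infinitely many sinks preclude asymptotic stability of the Milnor attractor.) -/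

import Mathlib

/-!
Each sink orbit meets `A`, because its trapping region has positive measure, and by minimality `A`
meets the basin of a sink only in the sink's orbit; hence `A` avoids the frontier of every trapping
region. The sink points on `A` accumulate at a point `p` lying in no basin. Join a sink point `a`
close to `p` to `p` by a small connected set `C`. Asymptotic stability and compactness of
`closure C` give an iterate `F^[N]` pushing all of `C` off the frontier of the trapping region `U`
of `a`, yet `F^[N] '' C` is connected, meets `U` at `F^[N] a` and leaves it at `F^[N] p`.
-/

open Set Function Filter Topology MeasureTheory

/-- The ω-limit set of `x` under `F`: `⋂_N closure {F^[n] x : n ≥ N}`. -/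
def omegaSet {X : Type*} [TopologicalSpace X] (F : X → X) (x : X) : Set X :=
  ⋂ N : ℕ, closure ((fun n => F^[n] x) '' Set.Ici N)

/-- Lyapunov stability of a set `K` for the map `F`. -/
def IsLyapunovStable {X : Type*} [TopologicalSpace X] (F : X → X) (K : Set X) : Prop :=
  ∀ V : Set X, IsOpen V → K ⊆ V →
    ∃ W : Set X, IsOpen W ∧ K ⊆ W ∧ ∀ x ∈ W, ∀ n : ℕ, F^[n] x ∈ V

/-- The (forward) orbit of a point; for a periodic point with `F^[m] γ = γ`, `m ≥ 1`,
this coincides with `{F^[i] γ : 0 ≤ i < m}`. -/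
def orbitSet {X : Type*} (F : X → X) (γ : X) : Set X := Set.range fun i : ℕ => F^[i] γ

/-- `γ` is a periodic topological sink of `F` with trapping neighborhood `U`. -/
def IsTopSink {X : Type*} [TopologicalSpace X] (F : X → X) (γ : X) (U : Set X) : Prop :=
  (∃ m : ℕ, 1 ≤ m ∧ F^[m] γ = γ) ∧ IsOpen U ∧ orbitSet F γ ⊆ U ∧
    F '' closure U ⊆ U ∧ (⋂ n : ℕ, F^[n] '' U) = orbitSet F γ

/-- `A` is the Milnor attractor of `F` w.r.t. the measure `μ`. -/
def IsMilnorAttractor {X : Type*} [TopologicalSpace X] [MeasurableSpace X]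
    (μ : Measure X) (F : X → X) (A : Set X) : Prop :=
  IsClosed A ∧ (∀ᵐ x ∂μ, omegaSet F x ⊆ A) ∧
    ∀ A' : Set X, IsClosed A' → (∀ᵐ x ∂μ, omegaSet F x ⊆ A') → A ⊆ A'

lemma iterate_mem_orbitSet {X : Type*} {f : X → X} {γ y : X} (hy : y ∈ orbitSet f γ)
    (n : ℕ) : f^[n] y ∈ orbitSet f γ := by
  obtain ⟨i, rfl⟩ := hy
  exact ⟨n + i, iterate_add_apply f n i γ⟩

section Omega

variable {X : Type*} [TopologicalSpace X] {f : X → X}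

lemma omegaSet_nonempty [CompactSpace X] (f : X → X) (x : X) : (omegaSet f x).Nonempty :=
  IsCompact.nonempty_iInter_of_sequence_nonempty_isCompact_isClosed _
    (fun N => closure_mono (image_mono (Ici_subset_Ici.2 N.le_succ)))
    (fun _ => (nonempty_Ici.image _).closure) isClosed_closure.isCompact
    (fun _ => isClosed_closure)

lemma omegaSet_subset_closure_orbitSet (f : X → X) (x : X) :
    omegaSet f x ⊆ closure (orbitSet f x) :=
  (iInter_subset _ 0).trans (closure_mono (image_subset_range _ _))

lemma mapsTo_omegaSet (hf : Continuous f) (x : X) : MapsTo f (omegaSet f x) (omegaSet f x) := by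
  intro y hy
  refine mem_iInter.2 fun N => ?_
  have htail : f '' ((fun n => f^[n] x) '' Ici N) ⊆ (fun n => f^[n] x) '' Ici N := by
    rintro _ ⟨_, ⟨k, hk, rfl⟩, rfl⟩
    exact ⟨k + 1, le_trans hk k.le_succ, iterate_succ_apply' f k x⟩
  exact closure_mono htail
    (image_closure_subset_closure_image hf (mem_image_of_mem f (mem_iInter.1 hy N)))

end Omega

section Basin

variable {X : Type*} {f : X → X} {U : Set X} {x : X}

def basin (f : X → X) (U : Set X) : Set X := ⋃ n : ℕ, f^[n] ⁻¹' U

lemma mem_basin : x ∈ basin f U ↔ ∃ n, f^[n] x ∈ U := mem_iUnion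

lemma subset_basin : U ⊆ basin f U := fun _ hx => mem_basin.2 ⟨0, hx⟩

variable [TopologicalSpace X]

lemma isOpen_basin (hf : Continuous f) (hU : IsOpen U) : IsOpen (basin f U) :=
  isOpen_iUnion fun n => hU.preimage (hf.iterate n)

lemma disjoint_omegaSet_basin (hf : Continuous f) (hU : IsOpen U) (hx : x ∉ basin f U) :
    Disjoint (omegaSet f x) (basin f U) := by
  refine disjoint_left.2 fun y hy hyU => hx ?_
  obtain ⟨m, hm⟩ := mem_basin.1 hyU
  have hmω := omegaSet_subset_closure_orbitSet f x ((mapsTo_omegaSet hf x).iterate m hy)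
  obtain ⟨_, hU', k, rfl⟩ := mem_closure_iff.1 hmω U hU hm
  exact mem_basin.2 ⟨k, hU'⟩

/-- The tail of the orbit of `x` from time `m + n + 1` on lies in `f^[n+1] '' U`, and the closed set
`f^[n+1] '' closure U` (closed as a compact image) sits between its closure and `f^[n] '' U`. -/
lemma omegaSet_subset_iInter_image [CompactSpace X] [T2Space X] (hf : Continuous f)
    (hU : MapsTo f (closure U) U) (hx : x ∈ basin f U) :
    omegaSet f x ⊆ ⋂ n : ℕ, f^[n] '' U := by
  obtain ⟨m, hm⟩ := mem_basin.1 hx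
  refine subset_iInter fun n => (iInter_subset _ (m + n + 1)).trans ?_
  have htail : (fun k => f^[k] x) '' Ici (m + n + 1) ⊆ f^[n + 1] '' closure U := by
    rintro _ ⟨k, hk, rfl⟩
    obtain ⟨j, rfl⟩ : ∃ j, k = n + 1 + (j + m) := ⟨k - m - n - 1, by grind⟩
    change f^[n + 1 + (j + m)] x ∈ _
    rw [iterate_add_apply f (n + 1), iterate_add_apply f j]
    exact mem_image_of_mem _ (subset_closure ((hU.mono_left subset_closure).iterate j hm))
  have hclosed : IsClosed (f^[n + 1] '' closure U) :=
    (isClosed_closure.isCompact.image (hf.iterate _)).isClosed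
  calc closure ((fun k => f^[k] x) '' Ici (m + n + 1)) ⊆ f^[n + 1] '' closure U :=
        closure_minimal htail hclosed
    _ = f^[n] '' (f '' closure U) := by rw [iterate_succ, image_comp]
    _ ⊆ f^[n] '' U := image_mono hU.image_subset

end Basin

namespace IsTopSink

variable {X : Type*} [TopologicalSpace X] {f : X → X} {γ : X} {U : Set X}

lemma orbitSet_finite (hs : IsTopSink f γ U) : (orbitSet f γ).Finite := by
  obtain ⟨m, hm, hγ⟩ := hs.1
  have hper : IsPeriodicPt f m γ := hγ
  refine ((finite_Iio m).image fun i => f^[i] γ).subset ?_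
  rintro _ ⟨i, rfl⟩
  exact ⟨i % m, Nat.mod_lt i hm, hper.iterate_mod_apply i⟩

variable [CompactSpace X] [T2Space X]

lemma omegaSet_subset (hs : IsTopSink f γ U) (hf : Continuous f) {x : X}
    (hx : x ∈ basin f U) : omegaSet f x ⊆ orbitSet f γ :=
  hs.2.2.2.2 ▸ omegaSet_subset_iInter_image hf (mapsTo_iff_image_subset.2 hs.2.2.2.1) hx

lemma disjoint_basin (hs : IsTopSink f γ U) {γ' : X} {U' : Set X} (hs' : IsTopSink f γ' U')
    (hf : Continuous f) (h : Disjoint (orbitSet f γ) (orbitSet f γ')) :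
    Disjoint (basin f U) (basin f U') := by
  refine disjoint_left.2 fun x hx hx' => ?_
  obtain ⟨y, hy⟩ := omegaSet_nonempty f x
  exact disjoint_left.1 h (hs.omegaSet_subset hf hx hy) (hs'.omegaSet_subset hf hx' hy)

end IsTopSink

namespace IsMilnorAttractor

variable {X : Type*} [TopologicalSpace X] [CompactSpace X] [T2Space X] [MeasurableSpace X]
  {μ : Measure X} {f : X → X} {A : Set X} {γ : X} {U : Set X}

lemma inter_orbitSet_nonempty (hA : IsMilnorAttractor μ f A)
    (hμ : ∀ V : Set X, IsOpen V → V.Nonempty → 0 < μ V) (hf : Continuous f)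
    (hs : IsTopSink f γ U) : (A ∩ orbitSet f γ).Nonempty := by
  have hγU : γ ∈ U := hs.2.2.1 ⟨0, rfl⟩
  obtain ⟨x, hxU, hxA⟩ := Measure.exists_mem_of_measure_ne_zero_of_ae
    (hμ U hs.2.1 ⟨γ, hγU⟩).ne' (ae_restrict_of_ae hA.2.1)
  obtain ⟨y, hy⟩ := omegaSet_nonempty f x
  exact ⟨y, hxA hy, hs.omegaSet_subset hf (subset_basin hxU) hy⟩

/-- By minimality: `(A \ basin f U) ∪ orbitSet f γ` is closed and still contains almost every
ω-limit set. -/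
lemma inter_basin_subset_orbitSet (hA : IsMilnorAttractor μ f A) (hf : Continuous f)
    (hs : IsTopSink f γ U) : A ∩ basin f U ⊆ orbitSet f γ := by
  have hclosed : IsClosed ((A \ basin f U) ∪ orbitSet f γ) :=
    (hA.1.sdiff (isOpen_basin hf hs.2.1)).union hs.orbitSet_finite.isClosed
  have hae : ∀ᵐ x ∂μ, omegaSet f x ⊆ (A \ basin f U) ∪ orbitSet f γ := by
    filter_upwards [hA.2.1] with x hx
    by_cases hxB : x ∈ basin f U
    · exact (hs.omegaSet_subset hf hxB).trans subset_union_right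
    · exact fun y hy =>
        Or.inl ⟨hx hy, disjoint_left.1 (disjoint_omegaSet_basin hf hs.2.1 hxB) hy⟩
  rintro y ⟨hyA, hyB⟩
  exact ((hA.2.2 _ hclosed hae hyA).resolve_left fun h => h.2 hyB)

lemma disjoint_frontier (hA : IsMilnorAttractor μ f A) (hf : Continuous f)
    (hs : IsTopSink f γ U) : Disjoint A (frontier U) := by
  refine disjoint_left.2 fun y hyA hyf => ?_
  have hyB : y ∈ basin f U :=
    mem_basin.2 ⟨1, hs.2.2.2.1 (mem_image_of_mem f (frontier_subset_closure hyf))⟩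
  have hyU : y ∈ U := hs.2.2.1 (hA.inter_basin_subset_orbitSet hf hs ⟨hyA, hyB⟩)
  exact disjoint_left.1 (disjoint_frontier_iff_isOpen.2 hs.2.1) hyf hyU

end IsMilnorAttractor

/-- Each point of `K` enters the stability neighbourhood `W` of `V` at some time, hence so does a
neighbourhood of it; compactness makes these entrance times uniform. -/
lemma IsLyapunovStable.eventually_forall_iterate_mem {X : Type*} [TopologicalSpace X]
    {f : X → X} {A K V : Set X} (hst : IsLyapunovStable f A) (hf : Continuous f)
    (hK : IsCompact K) (hKA : ∀ x ∈ K, ∀ W, IsOpen W → A ⊆ W → ∃ n, f^[n] x ∈ W)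
    (hV : IsOpen V) (hAV : A ⊆ V) : ∀ᶠ n in atTop, ∀ x ∈ K, f^[n] x ∈ V := by
  obtain ⟨W, hW, hAW, hWV⟩ := hst V hV hAV
  refine hK.induction_on (p := fun S => ∀ᶠ n in atTop, ∀ x ∈ S, f^[n] x ∈ V)
    (by simp) (fun S T hST hT => hT.mono fun n hn x hx => hn x (hST hx))
    (fun S T hS hT => (hS.and hT).mono fun n hn x hx => hx.elim (hn.1 x) (hn.2 x)) ?_
  intro x hx
  obtain ⟨n₀, hn₀⟩ := hKA x hx W hW hAW
  have hnhds : f^[n₀] ⁻¹' W ∈ 𝓝 x := (hW.preimage (hf.iterate n₀)).mem_nhds hn₀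
  refine ⟨_, mem_nhdsWithin_of_mem_nhds hnhds,
    (eventually_ge_atTop n₀).mono fun n hn y hy => ?_⟩
  rw [← Nat.sub_add_cancel hn, iterate_add_apply]
  exact hWV _ hy _

lemma eventually_mem_of_tendsto_infDist {X ι : Type*} [PseudoMetricSpace X] {A W : Set X}
    (hA : IsCompact A) (hne : A.Nonempty) (hW : IsOpen W) (hAW : A ⊆ W) {l : Filter ι}
    {u : ι → X} (h : Tendsto (fun i => Metric.infDist (u i) A) l (𝓝 0)) :
    ∀ᶠ i in l, u i ∈ W := by
  obtain ⟨δ, hδ, hδW⟩ := hA.exists_thickening_subset_open hW hAW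
  exact (h.eventually (gt_mem_nhds hδ)).mono fun i hi =>
    hδW ((Metric.mem_thickening_iff_infDist_lt hne).2 hi)

lemma infDist_lt_of_mem_closure_of_diam_lt {X : Type*} [PseudoMetricSpace X] {A C : Set X}
    {a x : X} {ε : ℝ} (haA : a ∈ A) (haC : a ∈ C) (hCb : Bornology.IsBounded C)
    (hC : Metric.diam C < ε) (hx : x ∈ closure C) : Metric.infDist x A < ε :=
  calc Metric.infDist x A ≤ dist x a := Metric.infDist_le_dist_of_mem haA
    _ ≤ Metric.diam (closure C) :=
      Metric.dist_le_diam_of_mem hCb.closure hx (subset_closure haC)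
    _ < ε := Metric.diam_closure C ▸ hC

lemma notMem_of_mapClusterPt_of_pairwise_disjoint {X ι : Type*} [TopologicalSpace X]
    {s : ι → Set X} (hs : ∀ j, IsOpen (s j)) (hdisj : Pairwise (Disjoint on s)) {a : ι → X}
    (ha : ∀ j, a j ∈ s j) {p : X} (hp : MapClusterPt p cofinite a) (k : ι) : p ∉ s k := by
  intro hpk
  obtain ⟨j, hj, hjk⟩ :=
    ((hp.frequently ((hs k).mem_nhds hpk)).and_eventually (eventually_cofinite_ne k)).exists
  exact disjoint_left.1 (hdisj hjk) (ha j) hj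

lemma IsPreconnected.subset_of_disjoint_frontier {X : Type*} [TopologicalSpace X] {s U : Set X}
    (hs : IsPreconnected s) (hU : IsOpen U) (hsU : (s ∩ U).Nonempty)
    (hfr : Disjoint s (frontier U)) : s ⊆ U :=
  hs.subset_of_closure_inter_subset hU hsU fun _ ⟨hcl, hx⟩ =>
    by_contra fun hxU => disjoint_left.1 hfr hx (hU.frontier_eq ▸ ⟨hcl, hxU⟩)

theorem stmt1_general {X : Type*} [MetricSpace X] [CompactSpace X]
    [MeasurableSpace X]
    (hlc : ∀ ε : ℝ, 0 < ε → ∃ δ : ℝ, 0 < δ ∧ ∀ x y : X, dist x y < δ →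
      ∃ C : Set X, IsConnected C ∧ x ∈ C ∧ y ∈ C ∧ Metric.diam C < ε)
    (F : X ≃ₜ X) (μ : Measure X)
    (hμ : ∀ V : Set X, IsOpen V → V.Nonempty → 0 < μ V)
    (γseq : ℕ → X) (Useq : ℕ → Set X)
    (hsinks : ∀ j, IsTopSink (⇑F) (γseq j) (Useq j))
    (hdisj : ∀ i j, i ≠ j → Disjoint (orbitSet (⇑F) (γseq i)) (orbitSet (⇑F) (γseq j)))
    (A : Set X) (hA : IsMilnorAttractor μ (⇑F) A) :
    ¬ (IsLyapunovStable (⇑F) A ∧ ∃ ε : ℝ, 0 < ε ∧ ∀ x : X, Metric.infDist x A < ε →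
        Tendsto (fun n => Metric.infDist ((⇑F)^[n] x) A) atTop (nhds 0)) := by
  rintro ⟨hst, ε, hε, hatt⟩
  have hf := F.continuous
  choose a haA haOrb using fun j => hA.inter_orbitSet_nonempty hμ hf (hsinks j)
  have ha_basin : ∀ j, a j ∈ basin F (Useq j) := fun j =>
    subset_basin ((hsinks j).2.2.1 (haOrb j))
  obtain ⟨p, -, hp⟩ := isCompact_univ.exists_mapClusterPt (f := cofinite) (u := a) (by simp)
  have hp_basin := notMem_of_mapClusterPt_of_pairwise_disjoint
    (fun j => isOpen_basin hf (hsinks j).2.1)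
    (fun i j hij => (hsinks i).disjoint_basin (hsinks j) hf (hdisj i j hij)) ha_basin hp
  obtain ⟨δ, hδ, hlcδ⟩ := hlc ε hε
  obtain ⟨J, hJ⟩ := (hp.frequently (Metric.ball_mem_nhds p hδ)).exists
  obtain ⟨C, hC, haC, hpC, hCdiam⟩ := hlcδ (a J) p hJ
  obtain ⟨N, hN⟩ := (hst.eventually_forall_iterate_mem hf isClosed_closure.isCompact
    (fun x hx W hW hAW => (eventually_mem_of_tendsto_infDist hA.1.isCompact ⟨_, haA 0⟩ hW hAW
      (hatt x (infDist_lt_of_mem_closure_of_diam_lt (haA J) haC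
        Metric.isBounded_of_compactSpace hCdiam hx))).exists)
    isClosed_frontier.isOpen_compl
    (hA.disjoint_frontier hf (hsinks J)).subset_compl_right).exists
  have himage : (⇑F)^[N] '' C ⊆ Useq J :=
    (hC.isPreconnected.image _ (hf.iterate N).continuousOn).subset_of_disjoint_frontier
      (hsinks J).2.1
      ⟨_, mem_image_of_mem _ haC, (hsinks J).2.2.1 (iterate_mem_orbitSet (haOrb J) N)⟩
      (disjoint_left.2 fun _ ⟨c, hc, hcN⟩ => hcN ▸ hN c (subset_closure hc))
  exact hp_basin J (mem_basin.2 ⟨N, himage (mem_image_of_mem _ hpC)⟩)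

/-- Abstract form of Okunev's theorem: a homeomorphism of a compact connected metric space
(with a uniform local connectedness property, and at least two points) carrying infinitely
many topological sinks with pairwise disjoint orbits has no asymptotically stable Milnor
attractor. -/
theorem stmt1 {X : Type*} [MetricSpace X] [CompactSpace X] [ConnectedSpace X] [Nontrivial X]
    [MeasurableSpace X] [BorelSpace X]
    (hlc : ∀ ε : ℝ, 0 < ε → ∃ δ : ℝ, 0 < δ ∧ ∀ x y : X, dist x y < δ →
      ∃ C : Set X, IsConnected C ∧ x ∈ C ∧ y ∈ C ∧ Metric.diam C < ε)
    (F : X ≃ₜ X) (μ : Measure X)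
    (hμ : ∀ V : Set X, IsOpen V → V.Nonempty → 0 < μ V)
    (γseq : ℕ → X) (Useq : ℕ → Set X)
    (hsinks : ∀ j, IsTopSink (⇑F) (γseq j) (Useq j))
    (hdisj : ∀ i j, i ≠ j → Disjoint (orbitSet (⇑F) (γseq i)) (orbitSet (⇑F) (γseq j)))
    (A : Set X) (hA : IsMilnorAttractor μ (⇑F) A) :
    ¬ (IsLyapunovStable (⇑F) A ∧ ∃ ε : ℝ, 0 < ε ∧ ∀ x : X, Metric.infDist x A < ε →
        Tendsto (fun n => Metric.infDist ((⇑F)^[n] x) A) atTop (nhds 0)) :=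
  stmt1_general hlc F μ hμ γseq Useq hsinks hdisj A hA
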